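/- For c ≥ 3, let k_{c,b} be given by the closed formula of Theorem 1.1 (k_{c,b} = (e(c,b)+e_p(c,b))/4). Then k_{c, ⌈c/3⌉+1} ≥ k_{c,b} for all 2 ≤ b ≤ ⌈(c+1)/2⌉; i.e., the mode of the braid-index distribution of 2-bridge knots of crossing number c is b = ⌈c/3⌉ + 1. -/

import Mathlib

/-!
For `3 ≤ b` both closed formulas are Jacobsthal terms `J n k = 2 ^ k * C(n - k, k)`:
`e c b = J (c - 2) (b - 2)`, and `ep c b = 2 * J ((c - 3) / 2) ((b - 2) / 2)` when `c + b` is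
odd (and `0` otherwise). The ratio
`J n (k + 1) / J n k = 2 (n - 2k) (n - 2k - 1) / ((k + 1) (n - k))` makes `J n` unimodal with
mode `(n + 1) / 3`, which for `e` is `b = ⌈c / 3⌉ + 1`; unless `c ≡ 2 (mod 3)`, the mode of `ep`
sits at the same `b`. For `c = 3t + 2`, `ep` vanishes at the mode `b = t + 2` of `e`, and the
drop of `e` from `t + 2` to `t + 2 ± 1` is at least `2 J (3t) t / (t + 2)`, while the Vandermonde
bound `J a i * J b j ≤ J (a + b) (i + j)` caps the maximum of `ep` by the same quantity.
-/

open Classical in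
/-- The number `e(c,b)` of even continued fraction representations with
crossing number `c` and braid index `b`, given by its closed formula. -/
noncomputable def e (c b : ℕ) : ℕ :=
  if 3 ≤ c ∧ Odd c ∧ b = 2 then 2
  else if 3 ≤ c ∧ 3 ≤ b ∧ b ≤ (c + 2) / 2 then
    2 ^ (b - 2) * Nat.choose (c - b) (b - 2)
  else 0
open Classical in
/-- The number `e_p(c,b)` of palindromic or anti-palindromic even continued
fraction representations with crossing number `c` and braid index `b`,
given by its closed formula. -/
noncomputable def ep (c b : ℕ) : ℕ :=
  if 2 ≤ b ∧ b ≤ (c + 2) / 2 ∧ Even c ∧ Odd b then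
    2 ^ ((b - 1) / 2) * Nat.choose ((c - b - 1) / 2) ((b - 3) / 2)
  else if 2 ≤ b ∧ b ≤ (c + 2) / 2 ∧ Odd c ∧ Even b then
    2 ^ (b / 2) * Nat.choose ((c - b - 1) / 2) ((b - 2) / 2)
  else 0

/-- The number of 2-bridge knots with crossing number `c` and braid index `b`. -/
noncomputable def numKnots (c b : ℕ) : ℚ := ((e c b : ℚ) + (ep c b : ℚ)) / 4

theorem Nat.choose_mul_choose_le_choose_add (a b i j : ℕ) :
    a.choose i * b.choose j ≤ (a + b).choose (i + j) := by
  rw [Nat.add_choose_eq]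
  exact Finset.single_le_sum (f := fun p : ℕ × ℕ => a.choose p.1 * b.choose p.2)
    (fun _ _ => Nat.zero_le _)
    (Finset.HasAntidiagonal.mem_antidiagonal.mpr (rfl : (i, j).1 + (i, j).2 = i + j))

-- `∑ k, jacobsthalTerm n k` is the `(n + 1)`-st Jacobsthal number.
def jacobsthalTerm (n k : ℕ) : ℕ := 2 ^ k * (n - k).choose k

namespace jacobsthalTerm

theorem eq_zero_of_lt {n k : ℕ} (h : n < 2 * k) : jacobsthalTerm n k = 0 := by
  rw [jacobsthalTerm, Nat.choose_eq_zero_of_lt (by omega), mul_zero]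

theorem one (n : ℕ) : jacobsthalTerm n 1 = 2 * (n - 1) := by
  simp [jacobsthalTerm]

theorem succ_mul_eq (k e : ℕ) :
    (k + 1) * (k + e + 1) * jacobsthalTerm (2 * k + e + 1) (k + 1) =
      2 * ((e + 1) * e) * jacobsthalTerm (2 * k + e + 1) k := by
  have h₁ := Nat.choose_succ_right_eq (k + e) k
  have h₂ := Nat.choose_mul_succ_eq (k + e) k
  rw [Nat.add_sub_cancel_left] at h₁
  rw [show k + e + 1 - k = e + 1 by omega] at h₂
  rw [jacobsthalTerm, jacobsthalTerm, show 2 * k + e + 1 - (k + 1) = k + e by omega,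
    show 2 * k + e + 1 - k = k + e + 1 by omega]
  linear_combination (2 ^ (k + 1) * (k + e + 1)) * h₁ + (2 ^ (k + 1) * e) * h₂

theorem le_succ {n k : ℕ} (h : 3 * k + 2 ≤ n) :
    jacobsthalTerm n k ≤ jacobsthalTerm n (k + 1) := by
  obtain ⟨e, rfl⟩ : ∃ e, n = 2 * k + e + 1 := ⟨n - 2 * k - 1, by omega⟩
  have hratio : (k + 1) * (k + e + 1) ≤ 2 * ((e + 1) * e) := by nlinarith
  refine Nat.le_of_mul_le_mul_left ?_ (by positivity : 0 < (k + 1) * (k + e + 1))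
  rw [succ_mul_eq]
  exact Nat.mul_le_mul_right _ hratio

theorem succ_le {n k : ℕ} (h : n ≤ 3 * k + 1) :
    jacobsthalTerm n (k + 1) ≤ jacobsthalTerm n k := by
  rcases lt_or_ge n (2 * k + 2) with hn | hn
  · rw [eq_zero_of_lt (by omega)]
    exact Nat.zero_le _
  obtain ⟨e, rfl⟩ : ∃ e, n = 2 * k + e + 1 := ⟨n - 2 * k - 1, by omega⟩
  have hratio : 2 * ((e + 1) * e) ≤ (k + 1) * (k + e + 1) := by nlinarith
  refine Nat.le_of_mul_le_mul_left ?_ (by positivity : 0 < (k + 1) * (k + e + 1))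
  rw [succ_mul_eq]
  exact Nat.mul_le_mul_right _ hratio

theorem monotoneOn (n : ℕ) : MonotoneOn (jacobsthalTerm n) (Set.Iic ((n + 1) / 3)) :=
  monotoneOn_of_le_succ Set.ordConnected_Iic fun k _ _ hk => by
    rw [Order.succ_eq_add_one, Set.mem_Iic] at *
    exact le_succ (by omega)

theorem antitoneOn (n : ℕ) : AntitoneOn (jacobsthalTerm n) (Set.Ici ((n + 1) / 3)) :=
  antitoneOn_of_succ_le Set.ordConnected_Ici fun k _ hk _ => by
    rw [Order.succ_eq_add_one, Set.mem_Ici] at *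
    exact succ_le (by omega)

theorem le_mode (n k : ℕ) : jacobsthalTerm n k ≤ jacobsthalTerm n ((n + 1) / 3) := by
  rcases le_total k ((n + 1) / 3) with h | h
  · exact monotoneOn n h (Set.mem_Iic.mpr le_rfl) h
  · exact antitoneOn n (Set.mem_Ici.mpr le_rfl) h h

theorem mul_le (a b i j : ℕ) :
    jacobsthalTerm a i * jacobsthalTerm b j ≤ jacobsthalTerm (a + b) (i + j) := by
  by_cases ha : a < 2 * i
  · rw [eq_zero_of_lt ha, zero_mul]; exact Nat.zero_le _
  by_cases hb : b < 2 * j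
  · rw [eq_zero_of_lt hb, mul_zero]; exact Nat.zero_le _
  calc jacobsthalTerm a i * jacobsthalTerm b j
      = 2 ^ (i + j) * ((a - i).choose i * (b - j).choose j) := by
        simp only [jacobsthalTerm]; ring
    _ ≤ 2 ^ (i + j) * (a - i + (b - j)).choose (i + j) :=
        Nat.mul_le_mul_left _ (Nat.choose_mul_choose_le_choose_add _ _ _ _)
    _ = jacobsthalTerm (a + b) (i + j) := by
        rw [jacobsthalTerm, show a - i + (b - j) = a + b - (i + j) by omega]

theorem pred_add_two_mul_le {t x : ℕ} (ht : 1 ≤ t)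
    (hx : (t + 2) * x ≤ jacobsthalTerm (3 * t) t) :
    jacobsthalTerm (3 * t) (t - 1) + 2 * x ≤ jacobsthalTerm (3 * t) t := by
  obtain ⟨u, rfl⟩ : ∃ u, t = u + 1 := ⟨t - 1, by omega⟩
  have hratio := succ_mul_eq u (u + 2)
  rw [show 2 * u + (u + 2) + 1 = 3 * (u + 1) by ring] at hratio
  rw [Nat.add_sub_cancel]
  refine Nat.le_of_mul_le_mul_left (c := 2 * (u + 2) * (u + 3)) ?_ (by positivity)
  nlinarith [Nat.mul_le_mul_left (4 * (u + 2)) hx]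

theorem succ_add_two_mul_le {t x : ℕ} (ht : 1 ≤ t)
    (hx : (t + 1) * x ≤ jacobsthalTerm (3 * t) t) :
    jacobsthalTerm (3 * t) (t + 1) + 2 * x ≤ jacobsthalTerm (3 * t) t := by
  obtain ⟨u, rfl⟩ : ∃ u, t = u + 1 := ⟨t - 1, by omega⟩
  have hratio := succ_mul_eq (u + 1) u
  rw [show 2 * (u + 1) + u + 1 = 3 * (u + 1) by ring] at hratio
  refine Nat.le_of_mul_le_mul_left (c := 2 * (u + 1) * (u + 2)) ?_ (by positivity)
  nlinarith [Nat.mul_le_mul_left (4 * (u + 1)) hx]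

theorem add_two_mul_half_mode_le {t : ℕ} (ht : 2 ≤ t) :
    (t + 2) * jacobsthalTerm ((3 * t - 1) / 2) (((3 * t - 1) / 2 + 1) / 3) ≤
      jacobsthalTerm (3 * t) t := by
  set a := (3 * t - 1) / 2 with ha
  set j := (a + 1) / 3 with hj
  have hsplit := mul_le a (3 * t - a) j (t - j)
  rw [Nat.add_sub_cancel' (by omega), Nat.add_sub_cancel' (by omega)] at hsplit
  have hcomplement : t + 2 ≤ jacobsthalTerm (3 * t - a) (t - j) :=
    calc t + 2 ≤ 2 * (3 * t - a - 1) := by omega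
      _ = jacobsthalTerm (3 * t - a) 1 := (one _).symm
      _ ≤ jacobsthalTerm (3 * t - a) (t - j) :=
        monotoneOn _ (Set.mem_Iic.mpr (by omega)) (Set.mem_Iic.mpr (by omega)) (by omega)
  calc (t + 2) * jacobsthalTerm a j
      ≤ jacobsthalTerm (3 * t - a) (t - j) * jacobsthalTerm a j :=
        Nat.mul_le_mul_right _ hcomplement
    _ ≤ jacobsthalTerm (3 * t) t := by rw [mul_comm]; exact hsplit

end jacobsthalTerm

theorem e_eq {c b : ℕ} (hb : 3 ≤ b) (hb' : b ≤ (c + 2) / 2) :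
    e c b = jacobsthalTerm (c - 2) (b - 2) := by
  rw [e, if_neg (by omega), if_pos (by omega), jacobsthalTerm,
    show c - 2 - (b - 2) = c - b by omega]

theorem ep_eq {c b : ℕ} (hb : 2 ≤ b) (hb' : b ≤ (c + 2) / 2) (hcb : Odd (c + b)) :
    ep c b = 2 * jacobsthalTerm ((c - 3) / 2) ((b - 2) / 2) := by
  rw [Nat.odd_iff] at hcb
  unfold ep
  split_ifs with h₁ h₂
  · rw [Nat.even_iff, Nat.odd_iff] at h₁
    rw [jacobsthalTerm, show (b - 1) / 2 = (b - 2) / 2 + 1 by omega, pow_succ,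
      show (c - 3) / 2 - (b - 2) / 2 = (c - b - 1) / 2 by omega,
      show (b - 3) / 2 = (b - 2) / 2 by omega]
    ring
  · rw [Nat.even_iff, Nat.odd_iff] at h₂
    rw [jacobsthalTerm, show b / 2 = (b - 2) / 2 + 1 by omega, pow_succ,
      show (c - 3) / 2 - (b - 2) / 2 = (c - b - 1) / 2 by omega]
    ring
  · simp only [Nat.even_iff, Nat.odd_iff] at h₁ h₂
    omega

theorem ep_le (c b : ℕ) :
    ep c b ≤ 2 * jacobsthalTerm ((c - 3) / 2) (((c - 3) / 2 + 1) / 3) := by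
  by_cases h : 2 ≤ b ∧ b ≤ (c + 2) / 2 ∧ Odd (c + b)
  · rw [ep_eq h.1 h.2.1 h.2.2]
    exact Nat.mul_le_mul_left _ (jacobsthalTerm.le_mode _ _)
  · rw [ep, if_neg, if_neg]
    · exact Nat.zero_le _
    all_goals
      simp only [Nat.even_iff, Nat.odd_iff] at h ⊢
      omega

theorem e_two_le (c : ℕ) : e c 2 ≤ 2 := by
  unfold e
  split_ifs <;> omega

theorem ep_two_le (c : ℕ) : ep c 2 ≤ 2 := by
  unfold ep
  split_ifs with h₁
  · exact absurd h₁.2.2.2 (by decide)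
  · simp
  · exact Nat.zero_le _

theorem e_add_ep_two_le {c : ℕ} (hc : 3 ≤ c) :
    e c 2 + ep c 2 ≤ e c ((c + 2) / 3 + 1) + ep c ((c + 2) / 3 + 1) := by
  obtain rfl | rfl | hc : c = 3 ∨ c = 4 ∨ 5 ≤ c := by omega
  · rfl
  · norm_num [e, ep, Nat.even_iff, Nat.odd_iff]
  calc e c 2 + ep c 2 ≤ 2 + 2 := add_le_add (e_two_le c) (ep_two_le c)
    _ ≤ 2 * (c - 2 - 1) := by omega
    _ = jacobsthalTerm (c - 2) 1 := (jacobsthalTerm.one _).symm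
    _ ≤ jacobsthalTerm (c - 2) ((c - 2 + 1) / 3) :=
        jacobsthalTerm.monotoneOn _ (Set.mem_Iic.mpr (by omega)) (Set.mem_Iic.mpr le_rfl) (by omega)
    _ = e c ((c + 2) / 3 + 1) := by
        rw [e_eq (by omega) (by omega), show (c + 2) / 3 + 1 - 2 = (c - 2 + 1) / 3 by omega]
    _ ≤ e c ((c + 2) / 3 + 1) + ep c ((c + 2) / 3 + 1) := Nat.le_add_right _ _

theorem e_add_ep_le_of_mod_three_ne_two {c b : ℕ} (hc : c % 3 ≠ 2) (hb : 3 ≤ b)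
    (hb' : b ≤ (c + 2) / 2) :
    e c b + ep c b ≤ e c ((c + 2) / 3 + 1) + ep c ((c + 2) / 3 + 1) := by
  calc e c b + ep c b
      ≤ jacobsthalTerm (c - 2) ((c - 2 + 1) / 3) +
          2 * jacobsthalTerm ((c - 3) / 2) (((c - 3) / 2 + 1) / 3) :=
        add_le_add ((e_eq hb hb').trans_le (jacobsthalTerm.le_mode _ _)) (ep_le c b)
    _ = e c ((c + 2) / 3 + 1) + ep c ((c + 2) / 3 + 1) := by
        rw [e_eq (by omega) (by omega), ep_eq (by omega) (by omega) (Nat.odd_iff.mpr (by omega)),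
          show (c + 2) / 3 + 1 - 2 = (c - 2 + 1) / 3 by omega,
          show (c - 2 + 1) / 3 / 2 = ((c - 3) / 2 + 1) / 3 by omega]

theorem e_add_ep_le_of_ne_mode {t b : ℕ} (ht : 2 ≤ t) (hb : 3 ≤ b)
    (hb' : b ≤ (3 * t + 4) / 2) (hbt : b ≠ t + 2) :
    e (3 * t + 2) b + ep (3 * t + 2) b ≤ e (3 * t + 2) (t + 2) := by
  have hep := ep_le (3 * t + 2) b
  rw [show (3 * t + 2 - 3) / 2 = (3 * t - 1) / 2 by omega] at hep
  have hx := jacobsthalTerm.add_two_mul_half_mode_le ht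
  rw [e_eq hb hb', e_eq (by omega) (by omega), Nat.add_sub_cancel, Nat.add_sub_cancel]
  rcases Nat.lt_or_gt_of_ne hbt with hlt | hgt
  · have he : jacobsthalTerm (3 * t) (b - 2) ≤ jacobsthalTerm (3 * t) (t - 1) :=
      jacobsthalTerm.monotoneOn _ (Set.mem_Iic.mpr (by omega)) (Set.mem_Iic.mpr (by omega))
        (by omega)
    exact (add_le_add he hep).trans (jacobsthalTerm.pred_add_two_mul_le (by omega) hx)
  · have he : jacobsthalTerm (3 * t) (b - 2) ≤ jacobsthalTerm (3 * t) (t + 1) :=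
      jacobsthalTerm.antitoneOn _ (Set.mem_Ici.mpr (by omega)) (Set.mem_Ici.mpr (by omega))
        (by omega)
    have hx' := (Nat.mul_le_mul_right _ (Nat.le_succ (t + 1))).trans hx
    exact (add_le_add he hep).trans (jacobsthalTerm.succ_add_two_mul_le (by omega) hx')

theorem e_add_ep_le_mode {c b : ℕ} (hc : 3 ≤ c) (hb : 2 ≤ b) (hb' : b ≤ (c + 2) / 2) :
    e c b + ep c b ≤ e c ((c + 2) / 3 + 1) + ep c ((c + 2) / 3 + 1) := by
  obtain rfl | hb := hb.eq_or_lt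
  · exact e_add_ep_two_le hc
  by_cases hc3 : c % 3 = 2
  · by_cases hbm : b = (c + 2) / 3 + 1
    · rw [hbm]
    obtain ⟨t, rfl⟩ : ∃ t, c = 3 * t + 2 := ⟨c / 3, by omega⟩
    rw [show (3 * t + 2 + 2) / 3 + 1 = t + 2 by omega] at hbm ⊢
    exact (e_add_ep_le_of_ne_mode (by omega) hb (by omega) hbm).trans (Nat.le_add_right _ _)
  · exact e_add_ep_le_of_mod_three_ne_two hc3 hb hb'

theorem numKnots_mode (c : ℕ) (hc : 3 ≤ c) (b : ℕ) (hb1 : 2 ≤ b)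
    (hb2 : b ≤ (c + 2) / 2) :
    numKnots c b ≤ numKnots c ((c + 2) / 3 + 1) := by
  have h := e_add_ep_le_mode hc hb1 hb2
  unfold numKnots
  gcongr ?_ / _
  exact_mod_cast h
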